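/- The image under T of the set of n×n EDMs equals { B ∈ S^n : B ⪰ 0, Be = 0 }, where T(D) = -½ J D J and J = I - ee^T/n. -/

import Mathlib

/-!
Points with Gram matrix `G` have squared distances `K(G)ᵢⱼ = Gᵢᵢ + Gⱼⱼ - 2Gᵢⱼ` (`distSqOfGram`),
and `K(G) = diag(G)eᵀ + e diag(G)ᵀ - 2G`. Since `Je = 0` and `eᵀJ = 0`, the rank-one terms die and
`T(K(G)) = JGJ`. Hence `T` maps the EDMs onto `{JGJ : G ⪰ 0}`, every positive semidefinite matrix
being a Gram matrix, and these matrices are positive semidefinite with `JGJe = 0`. Conversely a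
positive semidefinite `B` with `Be = 0` is symmetric, so `JB = BJ = B`, that is, `B = T(K(B))`.
-/

open Matrix BigOperators

/-- `D` is a Euclidean distance matrix. -/
def IsEDM {n : ℕ} (D : Matrix (Fin n) (Fin n) ℝ) : Prop :=
  ∃ (k : ℕ) (p : Fin n → EuclideanSpace ℝ (Fin k)),
    ∀ i j, D i j = dist (p i) (p j) ^ 2

namespace Matrix

variable {ι : Type*}

def distSqOfGram (G : Matrix ι ι ℝ) : Matrix ι ι ℝ :=
  of fun i j => G i i + G j j - 2 * G i j

theorem distSqOfGram_gram {E : Type*} [NormedAddCommGroup E] [InnerProductSpace ℝ E]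
    (p : ι → E) : distSqOfGram (gram ℝ p) = of fun i j => dist (p i) (p j) ^ 2 := by
  ext i j
  simp only [distSqOfGram, gram_apply, of_apply, dist_eq_norm, norm_sub_sq_real,
    real_inner_self_eq_norm_sq]
  ring

theorem distSqOfGram_eq_vecMulVec (G : Matrix ι ι ℝ) :
    distSqOfGram G = vecMulVec (diag G) 1 + vecMulVec 1 (diag G) - (2 : ℝ) • G := by
  ext i j
  simp [distSqOfGram]

variable [Fintype ι]

theorem neg_half_smul_mul_distSqOfGram_mul {J : Matrix ι ι ℝ} (hJ : J *ᵥ 1 = 0)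
    (hJ' : 1 ᵥ* J = 0) (G : Matrix ι ι ℝ) :
    (-(1 / 2) : ℝ) • (J * distSqOfGram G * J) = J * G * J := by
  simp only [distSqOfGram_eq_vecMulVec, Matrix.mul_sub, Matrix.mul_add, Matrix.sub_mul,
    Matrix.add_mul, mul_vecMulVec, vecMulVec_mul, hJ, hJ', vecMulVec_zero, zero_vecMulVec,
    Matrix.mul_smul, Matrix.smul_mul, zero_add, Matrix.zero_mul]
  module

open scoped ComplexOrder in
theorem PosSemidef.exists_eq_gram {𝕜 : Type*} [RCLike 𝕜] {B : Matrix ι ι 𝕜}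
    (hB : B.PosSemidef) : ∃ (k : ℕ) (p : ι → EuclideanSpace 𝕜 (Fin k)), B = gram 𝕜 p := by
  obtain ⟨k, v, rfl⟩ := posSemidef_iff_eq_sum_vecMulVec.mp hB
  refine ⟨k, fun i => WithLp.toLp 2 fun a => star (v a i), ?_⟩
  ext i j
  simp [gram_apply, sum_apply, vecMulVec_apply, PiLp.inner_apply, mul_comm]

theorem IsHermitian.vecMul_eq_mulVec {A : Matrix ι ι ℝ} (hA : A.IsHermitian) (x : ι → ℝ) :
    x ᵥ* A = A *ᵥ x := by
  rw [← vecMul_transpose, ← conjTranspose_eq_transpose_of_trivial, hA.eq]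

variable (ι) [DecidableEq ι]

noncomputable def centeringMatrix : Matrix ι ι ℝ :=
  1 - (Fintype.card ι : ℝ)⁻¹ • of fun _ _ => 1

variable {ι}

theorem centeringMatrix_eq_sub_vecMulVec :
    centeringMatrix ι = 1 - (Fintype.card ι : ℝ)⁻¹ • vecMulVec 1 1 := by
  ext i j
  simp [centeringMatrix]

theorem isHermitian_centeringMatrix : (centeringMatrix ι).IsHermitian := by
  ext i j
  simp [centeringMatrix, one_apply, eq_comm]

theorem centeringMatrix_mulVec_one : centeringMatrix ι *ᵥ 1 = 0 := by
  rcases isEmpty_or_nonempty ι with hι | hι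
  · exact Subsingleton.elim _ _
  · ext i
    simp [centeringMatrix, mulVec, dotProduct, Matrix.sub_apply, one_apply]

theorem one_vecMul_centeringMatrix : 1 ᵥ* centeringMatrix ι = 0 := by
  rw [isHermitian_centeringMatrix.vecMul_eq_mulVec, centeringMatrix_mulVec_one]

theorem centeringMatrix_mul_of_one_vecMul {B : Matrix ι ι ℝ} (hB : 1 ᵥ* B = 0) :
    centeringMatrix ι * B = B := by
  rw [centeringMatrix_eq_sub_vecMulVec, Matrix.sub_mul, Matrix.smul_mul, vecMulVec_mul, hB,
    vecMulVec_zero, smul_zero, sub_zero, Matrix.one_mul]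

theorem mul_centeringMatrix_of_mulVec_one {B : Matrix ι ι ℝ} (hB : B *ᵥ 1 = 0) :
    B * centeringMatrix ι = B := by
  rw [centeringMatrix_eq_sub_vecMulVec, Matrix.mul_sub, Matrix.mul_smul, mul_vecMulVec, hB,
    zero_vecMulVec, smul_zero, sub_zero, Matrix.mul_one]

theorem centeringMatrix_mul_mul_centeringMatrix {B : Matrix ι ι ℝ} (hB : B.IsHermitian)
    (hB1 : B *ᵥ 1 = 0) : centeringMatrix ι * B * centeringMatrix ι = B := by
  rw [centeringMatrix_mul_of_one_vecMul (hB.vecMul_eq_mulVec 1 ▸ hB1),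
    mul_centeringMatrix_of_mulVec_one hB1]

end Matrix

theorem stmt2_general (n : ℕ)
    (J : Matrix (Fin n) (Fin n) ℝ)
    (hJ : J = 1 - (n : ℝ)⁻¹ • Matrix.of (fun _ _ => (1 : ℝ))) :
    (fun D : Matrix (Fin n) (Fin n) ℝ => (-(1/2) : ℝ) • (J * D * J)) ''
        {D | IsEDM D} =
      {B : Matrix (Fin n) (Fin n) ℝ | B.PosSemidef ∧ B *ᵥ (fun _ => (1 : ℝ)) = 0} := by
  obtain rfl : J = centeringMatrix (Fin n) := by rw [hJ, centeringMatrix, Fintype.card_fin]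
  have hT := neg_half_smul_mul_distSqOfGram_mul centeringMatrix_mulVec_one
    (one_vecMul_centeringMatrix (ι := Fin n))
  ext B
  constructor
  · rintro ⟨D, ⟨k, p, hp⟩, rfl⟩
    obtain rfl : D = distSqOfGram (gram ℝ p) := by
      rw [distSqOfGram_gram]; ext i j; exact hp i j
    dsimp only
    rw [hT]
    refine ⟨?_, ?_⟩
    · have := (posSemidef_gram ℝ p).conjTranspose_mul_mul_same (centeringMatrix (Fin n))
      rwa [isHermitian_centeringMatrix.eq] at this
    · rw [← mulVec_mulVec, ← Pi.one_def, centeringMatrix_mulVec_one, mulVec_zero]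
  · rintro ⟨hB, hB1⟩
    obtain ⟨k, p, rfl⟩ := hB.exists_eq_gram
    refine ⟨distSqOfGram (gram ℝ p), ⟨k, p, fun i j => by rw [distSqOfGram_gram]; rfl⟩, ?_⟩
    exact (hT _).trans (centeringMatrix_mul_mul_centeringMatrix hB.isHermitian hB1)

/-- The image under `T : D ↦ -½ J D J` of the set of `n × n` EDMs equals
`{ B : B ⪰ 0, Be = 0 }`, with `J = I - eeᵀ/n`. -/
theorem stmt2 (n : ℕ) (hn : 0 < n)
    (J : Matrix (Fin n) (Fin n) ℝ)
    (hJ : J = 1 - (n : ℝ)⁻¹ • Matrix.of (fun _ _ => (1 : ℝ))) :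
    (fun D : Matrix (Fin n) (Fin n) ℝ => (-(1/2) : ℝ) • (J * D * J)) ''
        {D | IsEDM D} =
      {B : Matrix (Fin n) (Fin n) ℝ | B.PosSemidef ∧ B *ᵥ (fun _ => (1 : ℝ)) = 0} :=
  stmt2_general n J hJ
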